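/- arXiv:1804.02534 — 3 statements merged into one kernel-verified Lean document; each statement's English description precedes it below -/
import Mathlib

section
/- Let I be a set, E an equivalence relation on I, n : I → ℕ positive, and suppose m : E → ℕ satisfies the index conditions. Fix a prime p and a natural number k, and define x ∼ y iff x = y, or (x,y) ∈ E and p^k divides m(x,y). Then ∼ is an equivalence relation on I. -/
theorem equivalence_eq_or_of_symm_of_trans {α : Type*} {r : α → α → Prop}
    (hsymm : ∀ {x y}, r x y → r y x) (htrans : ∀ {x y z}, r x y → r y z → r x z) :
    Equivalence (fun x y => x = y ∨ r x y) where
  refl _ := Or.inl rfl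
  symm := by
    rintro x y (rfl | hxy)
    exacts [Or.inl rfl, Or.inr (hsymm hxy)]
  trans := by
    rintro x y z (rfl | hxy) (rfl | hyz)
    exacts [Or.inl rfl, Or.inr hyz, Or.inr hxy, Or.inr (htrans hxy hyz)]

theorem equivalence_eq_or_dvd_of_gcd_dvd {I : Type*} {E : I → I → Prop} (hE : Equivalence E)
    {m : I → I → ℕ} (hsymm : ∀ x y, E x y → m y x = m x y)
    (hgcd : ∀ x y z, E x y → E y z → Nat.gcd (m x y) (m y z) ∣ m x z) (d : ℕ) :
    Equivalence (fun x y => x = y ∨ (E x y ∧ d ∣ m x y)) :=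
  equivalence_eq_or_of_symm_of_trans
    (fun ⟨hxy, hd⟩ => ⟨hE.symm hxy, hsymm _ _ hxy ▸ hd⟩)
    (fun ⟨hxy, hdxy⟩ ⟨hyz, hdyz⟩ =>
      ⟨hE.trans hxy hyz, (Nat.dvd_gcd hdxy hdyz).trans (hgcd _ _ _ hxy hyz)⟩)

theorem stmt_8_general {I : Type*} (E : I → I → Prop) (hE : Equivalence E)
    (m : I → I → ℕ)
    (idx3 : ∀ x y, E x y → m y x = m x y)
    (idx4 : ∀ x y z, E x y → E y z →
      Nat.gcd (m x y) (m y z) = Nat.gcd (m x y) (m x z) ∧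
      Nat.gcd (m x y) (m x z) = Nat.gcd (m x z) (m y z))
    (p : ℕ) (k : ℕ) :
    Equivalence (fun x y => x = y ∨ (E x y ∧ p ^ k ∣ m x y)) :=
  equivalence_eq_or_dvd_of_gcd_dvd hE idx3
    (fun x y z hxy hyz => (idx4 x y z hxy hyz).1 ▸ Nat.gcd_dvd_right _ _) (p ^ k)

theorem stmt_8 {I : Type*} (E : I → I → Prop) (hE : Equivalence E)
    (n : I → ℕ) (hn : ∀ x, 0 < n x)
    (m : I → I → ℕ) (hm : ∀ x y, E x y → 0 < m x y)
    (idx1 : ∀ x y, E x y → m x y ∣ n x ∧ m x y ∣ n y)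
    (idx2 : ∀ x, m x x = n x)
    (idx3 : ∀ x y, E x y → m y x = m x y)
    (idx4 : ∀ x y z, E x y → E y z →
      Nat.gcd (m x y) (m y z) = Nat.gcd (m x y) (m x z) ∧
      Nat.gcd (m x y) (m x z) = Nat.gcd (m x z) (m y z))
    (p : ℕ) (hp : p.Prime) (k : ℕ) :
    Equivalence (fun x y => x = y ∨ (E x y ∧ p ^ k ∣ m x y)) :=
  stmt_8_general E hE m idx3 idx4 p k
end

section
/- In a relation algebra, if x, y, z are subidentity elements and b ≤ y;1;z, then (x;1;y);b ≤ x;1;z. -/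
/-!
Composition is monotone in each argument, so `b ≤ y;1;z` gives
`(x;1;y);b ≤ x;(1;y;y;1);z`, and `1;y;y;1 ≤ 1` collapses this to `x;1;z`.
-/

/-- A relation algebra: a Boolean algebra with relative multiplication `comp`,
converse `conv`, and identity element `one'`, satisfying Tarski's axioms. -/
class RelationAlgebra (α : Type*) extends BooleanAlgebra α where
  comp : α → α → α
  conv : α → α
  one' : α
  comp_assoc : ∀ a b c : α, comp (comp a b) c = comp a (comp b c)
  comp_one' : ∀ a : α, comp a one' = a
  conv_conv : ∀ a : α, conv (conv a) = a
  comp_sup : ∀ a b c : α, comp (a ⊔ b) c = comp a c ⊔ comp b c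
  conv_sup : ∀ a b : α, conv (a ⊔ b) = conv a ⊔ conv b
  conv_comp : ∀ a b : α, conv (comp a b) = comp (conv b) (conv a)
  tarski : ∀ a b : α, comp (conv a) (comp a b)ᶜ ≤ bᶜ

open RelationAlgebra

namespace RelationAlgebra

variable {α : Type*} [RelationAlgebra α]

theorem conv_mono : Monotone (conv : α → α) := fun a b h => by
  rw [← sup_eq_right, ← conv_sup, sup_eq_right.mpr h]

theorem comp_mono_left (c : α) : Monotone (comp · c) := fun a b h => by
  rw [← sup_eq_right, ← comp_sup, sup_eq_right.mpr h]

/-- Only left distributivity is an axiom; the right-hand version is transported by `conv`. -/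
theorem comp_mono_right (c : α) : Monotone (comp c) := fun a b h => by
  have h' : conv (comp c a) ≤ conv (comp c b) := by
    rw [conv_comp, conv_comp]
    exact comp_mono_left _ (conv_mono h)
  simpa only [conv_conv] using conv_mono h'

theorem top_comp_comp_le (c w : α) : comp ⊤ (comp c w) ≤ comp ⊤ w := by
  rw [← comp_assoc]
  exact comp_mono_left w le_top

end RelationAlgebra

theorem stmt_12_general {α : Type*} [RelationAlgebra α] (x y z b : α)
    (hb : b ≤ comp (comp y ⊤) z) :
    comp (comp (comp x ⊤) y) b ≤ comp (comp x ⊤) z :=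
  calc comp (comp (comp x ⊤) y) b
      ≤ comp (comp (comp x ⊤) y) (comp (comp y ⊤) z) := comp_mono_right _ hb
    _ = comp x (comp ⊤ (comp (comp y (comp y ⊤)) z)) := by simp only [comp_assoc]
    _ ≤ comp x (comp ⊤ z) := comp_mono_right x (top_comp_comp_le _ _)
    _ = comp (comp x ⊤) z := (comp_assoc x ⊤ z).symm

theorem stmt_12 {α : Type*} [RelationAlgebra α] (x y z b : α)
    (hx : x ≤ one') (hy : y ≤ one') (hz : z ≤ one')
    (hb : b ≤ comp (comp y ⊤) z) :
    comp (comp (comp x ⊤) y) b ≤ comp (comp x ⊤) z :=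
  stmt_12_general x y z b hb
end

section
/- In a relation algebra, if x and y are subidentity atoms and 0 ≠ b ≤ x;1;y, then x;b = b and b;y = b. -/
open RelationAlgebra

namespace RelationAlgebra

variable {α : Type*} [RelationAlgebra α]

lemma comp_le_comp_right {a b : α} (h : a ≤ b) (c : α) : comp a c ≤ comp b c :=
  calc comp a c ≤ comp a c ⊔ comp b c := le_sup_left
    _ = comp b c := by rw [← comp_sup, sup_eq_right.mpr h]

lemma conv_le_conv {a b : α} (h : a ≤ b) : conv a ≤ conv b :=
  calc conv a ≤ conv a ⊔ conv b := le_sup_left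
    _ = conv b := by rw [← conv_sup, sup_eq_right.mpr h]

def convOrderIso : α ≃o α where
  toEquiv := Function.Involutive.toPerm conv conv_conv
  map_rel_iff' {a b} :=
    ⟨fun h => by simpa only [conv_conv] using conv_le_conv (show conv a ≤ conv b from h), conv_le_conv⟩

lemma conv_inf (a b : α) : conv (a ⊓ b) = conv a ⊓ conv b :=
  convOrderIso.map_inf a b

lemma conv_top : conv (⊤ : α) = ⊤ :=
  convOrderIso.map_top

lemma conv_one'_comp (a : α) : comp (conv one') a = a := by
  rw [← conv_conv a, ← conv_comp, comp_one']

lemma conv_one' : conv (one' : α) = one' :=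
  (comp_one' (conv one')).symm.trans (conv_one'_comp one')

lemma one'_comp (a : α) : comp one' a = a := by
  rw [← conv_one', conv_one'_comp]

lemma comp_sup_right (a b c : α) : comp a (b ⊔ c) = comp a b ⊔ comp a c := by
  apply convOrderIso.injective
  change conv _ = conv _
  rw [conv_comp, conv_sup, comp_sup, conv_sup, conv_comp, conv_comp]

lemma comp_le_comp_left (a : α) {b c : α} (h : b ≤ c) : comp a b ≤ comp a c :=
  calc comp a b ≤ comp a b ⊔ comp a c := le_sup_left
    _ = comp a c := by rw [← comp_sup_right, sup_eq_right.mpr h]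

lemma comp_inf_le_comp_inf_comp_conv (a b c : α) :
    comp a b ⊓ c ≤ comp a (b ⊓ comp (conv a) c) := by
  set d := comp (conv a) c
  have hdisj : comp a (b ⊓ dᶜ) ≤ cᶜ :=
    (comp_le_comp_left a inf_le_right).trans (by simpa only [conv_conv] using tarski (conv a) c)
  have hsplit : comp a b ≤ comp a (b ⊓ d) ⊔ cᶜ :=
    calc comp a b = comp a (b ⊓ d) ⊔ comp a (b ⊓ dᶜ) := by
          rw [← comp_sup_right, sup_inf_inf_compl]
      _ ≤ comp a (b ⊓ d) ⊔ cᶜ := sup_le_sup_left hdisj _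
  rw [← le_himp_iff, himp_eq]
  exact hsplit

variable {e : α}

lemma subid_comp_le (he : e ≤ one') (a : α) : comp e a ≤ a :=
  (comp_le_comp_right he a).trans_eq (one'_comp a)

lemma comp_subid_le (he : e ≤ one') (a : α) : comp a e ≤ a :=
  (comp_le_comp_left a he).trans_eq (comp_one' a)

lemma subid_comp_eq (he : e ≤ one') (a : α) : comp e a = a ⊓ comp e ⊤ := by
  have hconv : conv e ≤ one' := (conv_le_conv he).trans_eq conv_one'
  refine le_antisymm (le_inf (subid_comp_le he a) (comp_le_comp_left e le_top)) ?_
  calc a ⊓ comp e ⊤ = comp e ⊤ ⊓ a := inf_comm _ _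
    _ ≤ comp e (⊤ ⊓ comp (conv e) a) := comp_inf_le_comp_inf_comp_conv e ⊤ a
    _ ≤ comp e a := comp_le_comp_left e (inf_le_right.trans (subid_comp_le hconv a))

lemma comp_subid_eq (he : e ≤ one') (a : α) : comp a e = a ⊓ comp ⊤ e := by
  have hconv : conv e ≤ one' := (conv_le_conv he).trans_eq conv_one'
  calc comp a e = conv (comp (conv e) (conv a)) := by rw [← conv_comp, conv_conv]
    _ = a ⊓ comp ⊤ e := by
      rw [subid_comp_eq hconv, conv_inf, conv_comp, conv_conv, conv_conv, conv_top]

end RelationAlgebra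

theorem stmt_13_general {α : Type*} [RelationAlgebra α] (x y b : α)
    (hx' : x ≤ one') (hy' : y ≤ one')
    (hb : b ≤ comp (comp x ⊤) y) :
    comp x b = b ∧ comp b y = b := by
  have hbx : b ≤ comp x ⊤ := hb.trans (comp_subid_le hy' _)
  have hby : b ≤ comp ⊤ y := hb.trans (comp_assoc x ⊤ y ▸ subid_comp_le hx' _)
  exact ⟨by rw [subid_comp_eq hx', inf_eq_left.mpr hbx],
    by rw [comp_subid_eq hy', inf_eq_left.mpr hby]⟩

theorem stmt_13 {α : Type*} [RelationAlgebra α] (x y b : α)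
    (hx : IsAtom x) (hx' : x ≤ one') (hy : IsAtom y) (hy' : y ≤ one')
    (hb0 : b ≠ ⊥) (hb : b ≤ comp (comp x ⊤) y) :
    comp x b = b ∧ comp b y = b :=
  stmt_13_general x y b hx' hy' hb
end
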